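/- Let a ≥ 0, let Y and S be tableaux with product A = Y · S in the plactic monoid, let A = Ã · A_0 and Y = Ỹ · Y_0 be the horizontal cuts of A and Y after row a, and let Ỹ = M · N be any factorization. Then N · Y_0 · S = Ã′ · A_0 for some tableau Ã′ (with the factorization being the horizontal cut of N · Y_0 · S after row a), and M · Ã′ = Ã. -/

import Mathlib

/-- A tableau (or more generally a filling) given by its list of rows, top to bottom. -/
abbrev Tab := List (List ℕ)

/-- Row insertion: insert `x` into a weakly increasing row, bumping the
leftmost entry strictly greater than `x` (if any). -/
def rowInsert : List ℕ → ℕ → List ℕ × Option ℕ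
  | [], x => ([x], none)
  | y :: ys, x =>
    if y ≤ x then
      let r := rowInsert ys x
      (y :: r.1, r.2)
    else (x :: ys, some y)

/-- Insert an entry into a tableau by the row bumping algorithm. -/
def insertEntry : Tab → ℕ → Tab
  | [], x => [[x]]
  | row :: rest, x =>
    match rowInsert row x with
    | (r, none) => r :: rest
    | (r, some y) => r :: insertEntry rest y

/-- The row word of a tableau: rows read bottom to top, each left to right. -/
def wordOf (t : Tab) : List ℕ := t.reverse.flatten

/-- The plactic product `p · q` of two tableaux, computed by row-inserting
the row word of `q` into `p`. -/
def mulT (p q : Tab) : Tab := (wordOf q).foldl insertEntry p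

/-- `t` is a semistandard Young tableau: nonempty weakly increasing rows,
weakly decreasing row lengths, strictly increasing columns. -/
def IsTableau (t : Tab) : Prop :=
  (∀ r ∈ t, r ≠ [] ∧ List.Chain' (· ≤ ·) r) ∧
  List.Chain' (· ≥ ·) (t.map List.length) ∧
  ∀ i j, i + 1 < t.length → j < (t.getD (i+1) []).length →
    (t.getD i []).getD j 0 < (t.getD (i+1) []).getD j 0

def entry (t : Tab) (i j : ℕ) : ℕ := (t.getD i []).getD j 0

def rowLen (t : Tab) (i : ℕ) : ℕ := (t.getD i []).length

def colHeight (t : Tab) (j : ℕ) : ℕ := (t.filter (fun r => j < r.length)).length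

/-- The leftmost `b` columns of a tableau. -/
def leftCols (t : Tab) (b : ℕ) : Tab := (t.map (fun r => r.take b)).filter (fun r => !r.isEmpty)

/-- The part of a tableau strictly to the right of column `b`. -/
def rightCols (t : Tab) (b : ℕ) : Tab := (t.map (fun r => r.drop b)).filter (fun r => !r.isEmpty)

/-- The ring of symmetric functions, `ℤ[h₁, h₂, …]` with `X n` playing
the role of the complete homogeneous symmetric function `h_{n+1}`. -/
abbrev SymFn := MvPolynomial ℕ ℤ

/-- The complete homogeneous symmetric function `h m` (`1` for `m = 0`, `0` for `m < 0`). -/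
noncomputable def hSym (m : ℤ) : SymFn :=
  if m < 0 then 0 else if m = 0 then 1 else MvPolynomial.X (m.toNat - 1)

/-- The Schur function of an integer sequence, by the Jacobi-Trudi determinant. -/
noncomputable def schur (I : List ℤ) : SymFn :=
  Matrix.det (Matrix.of fun i j : Fin I.length => hSym (I.get i + (j : ℤ) - (i : ℤ)))

/-- `S(D)`: the Schur function of the sequence of row lengths of a diagram. -/
noncomputable def SD (D : Tab) : SymFn := schur (D.map fun r => (r.length : ℤ))

/-- A diagram with weakly increasing rows. -/
def WeakRows (D : Tab) : Prop := ∀ r ∈ D, List.Chain' (· ≤ ·) r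

/-- A violation at position `(i, j)` (rows indexed from `0`): a box in row `i ≥ 1`
with no box directly above it, or whose box directly above is not strictly smaller. -/
def ViolAt (D : Tab) (i j : ℕ) : Prop :=
  1 ≤ i ∧ i < D.length ∧ j < rowLen D i ∧
    (rowLen D (i-1) ≤ j ∨ entry D i j ≤ entry D (i-1) j)

/-- `rect D`: the plactic product of the rows of `D`, from bottom to top. -/
def rect (D : Tab) : Tab := D.reverse.foldl (fun acc r => mulT acc [r]) []
/-- The southwest order on violation positions: `(i,j)` is smaller than `(i',j')`
iff `j - i < j' - i'`, or `j - i = j' - i'` and `i < i'`. -/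
def violLT (p q : ℕ × ℕ) : Prop :=
  ((p.2 : ℤ) - p.1 < (q.2 : ℤ) - q.1) ∨ ((p.2 : ℤ) - p.1 = (q.2 : ℤ) - q.1 ∧ p.1 < q.1)

/-- `p` is the minimal violation of `D`. -/
def IsMinViol (D : Tab) (p : ℕ × ℕ) : Prop :=
  ViolAt D p.1 p.2 ∧ ∀ q, ViolAt D q.1 q.2 → q = p ∨ violLT p q

/-- An exchange operation between rows `i` and `i+1` of `D` (the second of which
contains a violation), producing `D'`. -/
def ExchangeStep (D : Tab) (i : ℕ) (D' : Tab) : Prop :=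
  i + 1 < D.length ∧ (∃ j, ViolAt [D.getD i [], D.getD (i+1) []] 1 j) ∧
  D'.length = D.length ∧ WeakRows D' ∧
  (∀ k, k ≠ i → k ≠ i + 1 → D'.getD k [] = D.getD k []) ∧
  rect [D'.getD i [], D'.getD (i+1) []] = rect [D.getD i [], D.getD (i+1) []] ∧
  SD [D'.getD i [], D'.getD (i+1) []] = - SD [D.getD i [], D.getD (i+1) []]

/-- `Q₀`: the part of `W` below row `a` and within the first `b` columns. -/
def Qzero (W : Tab) (a b : ℕ) : Tab :=
  ((W.drop a).map (fun r => r.take b)).filter (fun r => !r.isEmpty)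

/-- `P₀`: the part of `W` in the top `a` rows to the right of column `b`. -/
def Pzero (W : Tab) (a b : ℕ) : Tab :=
  ((W.take a).map (fun r => r.drop b)).filter (fun r => !r.isEmpty)

/-- `Z`: the part of `W` below row `a` and to the right of column `b`. -/
def Zpart (W : Tab) (a b : ℕ) : Tab :=
  ((W.drop a).map (fun r => r.drop b)).filter (fun r => !r.isEmpty)

/-- `T` is a rectangular tableau with `a` rows and `b` columns. -/
def IsRect (T : Tab) (a b : ℕ) : Prop :=
  IsTableau T ∧ T.length = a ∧ ∀ r ∈ T, r.length = b

/-- Every entry of `T` is strictly smaller than every entry of `X`. -/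
def EntriesLT (T X : Tab) : Prop := ∀ rt ∈ T, ∀ t ∈ rt, ∀ rx ∈ X, ∀ x ∈ rx, t < x

/-- `W` contains the rectangular tableau `T` (with `a` rows, `b` columns)
in its upper-left corner. -/
def ContainsUL (W T : Tab) (a b : ℕ) : Prop :=
  ∀ i < a, (W.getD i []).take b = T.getD i []

/-- All entries of `W` outside the upper-left `a × b` rectangle are strictly
larger than every entry of `T`. -/
def OuterEntriesGT (W T : Tab) (a b : ℕ) : Prop :=
  ∀ i j, j < rowLen W i → ¬ (i < a ∧ j < b) → ∀ rt ∈ T, ∀ t ∈ rt, t < entry W i j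

/-- A simple factorization `W = Q · T · P` with respect to the `a × b` rectangle:
`Q = Q₀ · Z₁` and `P = Z₂ · P₀` for some plactic factorization `Z = Z₁ · Z₂`. -/
def SimpleFact (W T : Tab) (a b : ℕ) (Q P : Tab) : Prop :=
  ∃ Z1 Z2 : Tab, IsTableau Z1 ∧ IsTableau Z2 ∧ mulT Z1 Z2 = Zpart W a b ∧
    Q = mulT (Qzero W a b) Z1 ∧ P = mulT Z2 (Pzero W a b)

/-- The elementary move `(X, Y) ⊨ (X', Y')` with respect to an `a × b` rectangle:
either a factor of the part of `X` right of column `b` moves to the front of `Y`,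
or a factor of the part of `Y` below row `a` moves to the end of `X`. -/
def RelTab (a b : ℕ) (x y : Tab × Tab) : Prop :=
  (∃ M N, IsTableau M ∧ IsTableau N ∧ mulT M N = rightCols x.1 b ∧
     y.1 = mulT (leftCols x.1 b) M ∧ y.2 = mulT N x.2) ∨
  (∃ M N, IsTableau M ∧ IsTableau N ∧ mulT M N = x.2.drop a ∧
     y.1 = mulT x.1 M ∧ y.2 = mulT N (x.2.take a))

/-- `S(P over Q)`: the Schur function of the sequence consisting of the row lengths
of `P` padded to length `a` by zeros, followed by the row lengths of `Q`. -/
noncomputable def SPQ (a : ℕ) (Q P : Tab) : SymFn :=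
  schur ((List.range a).map (fun i => (rowLen P i : ℤ)) ++ Q.map (fun r => (r.length : ℤ)))

/-- `P` and `Q` fit together as a tableau with `P` in the top `a` rows and `Q` below. -/
def FitsOver (a : ℕ) (Q P : Tab) : Prop :=
  ∀ j < rowLen Q 0, j < rowLen P (a-1) ∧ entry P (a-1) j < entry Q 0 j

/-- Membership in the set `𝒫ₐ` of pairs `(Q, P)`. -/
def MemPa (a : ℕ) (x : Tab × Tab) : Prop :=
  IsTableau x.1 ∧ IsTableau x.2 ∧ x.2.length ≤ a ∧ SPQ a x.1 x.2 ≠ 0 ∧ ¬ FitsOver a x.1 x.2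

/-- The first column of a tableau. -/
def firstCol (t : Tab) : List ℕ := t.map (fun r => r.headD 0)

/-- The diagram with `T · Y` (as juxtaposition) in the top `a` rows and `X` below. -/
def xtyDiag (T : Tab) (a : ℕ) (X Y : Tab) : Tab :=
  (List.range a).map (fun i => T.getD i [] ++ Y.getD i []) ++ X

def shapeOf (t : Tab) : List ℕ := t.map List.length

/-- A partition, as a weakly decreasing list of positive integers. -/
def IsPartitionL (l : List ℕ) : Prop := List.Chain' (· ≥ ·) l ∧ ∀ x ∈ l, 0 < x

namespace Plactic

def rowFold : List ℕ → List ℕ → List ℕ × List ℕ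
  | r, [] => (r, [])
  | r, c :: w =>
    let p := rowInsert r c
    let q := rowFold p.1 w
    (q.1, match p.2 with | none => q.2 | some y => y :: q.2)

abbrev P (T : Tab) (w : List ℕ) : Tab := w.foldl insertEntry T

/-! ### rowInsert basics -/

theorem RI_nil (x : ℕ) : rowInsert [] x = ([x], none) := rfl

theorem RI_cons_le {e x : ℕ} (t : List ℕ) (h : e ≤ x) :
    rowInsert (e :: t) x = (e :: (rowInsert t x).1, (rowInsert t x).2) := by
  simp [rowInsert, h]

theorem RI_cons_gt {e x : ℕ} (t : List ℕ) (h : x < e) :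
    rowInsert (e :: t) x = (x :: t, some e) := by
  simp [rowInsert, Nat.not_le.2 h]

theorem RI_app {r : List ℕ} {x : ℕ} (h : ∀ e ∈ r, e ≤ x) :
    rowInsert r x = (r ++ [x], none) := by
  induction r with
  | nil => rfl
  | cons e t ih =>
    rw [RI_cons_le t (h e (by simp)), ih (fun e he => h e (by simp [he]))]
    simp

theorem RI_prefix {p : List ℕ} {x : ℕ} (q : List ℕ) (h : ∀ e ∈ p, e ≤ x) :
    rowInsert (p ++ q) x = (p ++ (rowInsert q x).1, (rowInsert q x).2) := by
  induction p with
  | nil => simp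
  | cons e t ih =>
    rw [List.cons_append, RI_cons_le _ (h e (by simp)),
      ih (fun e he => h e (by simp [he]))]
    simp

theorem RI_char {r r' : List ℕ} {x w : ℕ} (h : rowInsert r x = (r', some w)) :
    ∃ p q, r = p ++ w :: q ∧ r' = p ++ x :: q ∧ (∀ e ∈ p, e ≤ x) ∧ x < w := by
  induction r generalizing r' with
  | nil => simp [RI_nil] at h
  | cons e t ih =>
    by_cases he : e ≤ x
    · rw [RI_cons_le t he, Prod.ext_iff] at h
      obtain ⟨h1, h2⟩ := h
      obtain ⟨p, q, hp1, hp2, hp3, hp4⟩ := ih (Prod.ext rfl h2)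
      refine ⟨e :: p, q, by simp [hp1], ?_, ?_, hp4⟩
      · simp only at h1; simp [← h1, hp2]
      · intro f hf
        rcases List.mem_cons.1 hf with rfl | hf
        · exact he
        · exact hp3 f hf
    · rw [RI_cons_gt t (Nat.not_le.1 he), Prod.ext_iff] at h
      simp only at h
      obtain ⟨h1, h2⟩ := h
      obtain rfl : e = w := Option.some.inj h2
      exact ⟨[], t, rfl, by simp [← h1], by simp, Nat.not_le.1 he⟩

theorem RI_none_char {r r' : List ℕ} {x : ℕ} (h : rowInsert r x = (r', none)) :
    r' = r ++ [x] ∧ ∀ e ∈ r, e ≤ x := by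
  induction r generalizing r' with
  | nil => rw [RI_nil, Prod.ext_iff] at h; simp only at h; simp [← h.1]
  | cons e t ih =>
    by_cases he : e ≤ x
    · rw [RI_cons_le t he, Prod.ext_iff] at h
      obtain ⟨h1, h2⟩ := h
      simp only at h1 h2
      obtain ⟨ih1, ih2⟩ := ih (Prod.ext rfl h2)
      refine ⟨by simp [← h1, ih1], ?_⟩
      intro f hf
      rcases List.mem_cons.1 hf with rfl | hf
      · exact he
      · exact ih2 f hf
    · rw [RI_cons_gt t (Nat.not_le.1 he), Prod.ext_iff] at h
      simp at h

theorem RI_fst_ne_nil (r : List ℕ) (x : ℕ) : (rowInsert r x).1 ≠ [] := by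
  rcases h : rowInsert r x with ⟨r', o⟩
  cases o with
  | none => obtain ⟨h1, -⟩ := RI_none_char h; simp [h1]
  | some w => obtain ⟨p, q, -, h2, -, -⟩ := RI_char h; simp [h2]

theorem RI_out_mem {r r' : List ℕ} {x w : ℕ} (h : rowInsert r x = (r', some w)) :
    w ∈ r ∧ x < w := by
  obtain ⟨p, q, h1, -, -, h4⟩ := RI_char h
  exact ⟨by simp [h1], h4⟩

theorem RI_mem {r r' : List ℕ} {x w : ℕ} (h : rowInsert r x = (r', some w))
    {e : ℕ} (he : e ∈ r') : e = x ∨ e ∈ r := by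
  obtain ⟨p, q, h1, h2, -, -⟩ := RI_char h
  subst h2
  rcases List.mem_append.1 he with hp | hq
  · exact Or.inr (by simp [h1, hp])
  · rcases List.mem_cons.1 hq with rfl | hq
    · exact Or.inl rfl
    · exact Or.inr (by simp [h1, hq])

/-- rowInsert preserves sortedness -/
theorem RI_sorted {r : List ℕ} {x : ℕ} (hr : List.Pairwise (· ≤ ·) r) :
    List.Pairwise (· ≤ ·) (rowInsert r x).1 := by
  rcases h : rowInsert r x with ⟨r', o⟩
  cases o with
  | none =>
    obtain ⟨h1, h2⟩ := RI_none_char h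
    subst h1
    rw [List.pairwise_append]
    exact ⟨hr, by simp, by simpa using h2⟩
  | some w =>
    obtain ⟨p, q, h1, h2, h3, h4⟩ := RI_char h
    subst h1 h2
    rw [List.pairwise_append] at hr ⊢
    obtain ⟨hp, hwq, hcross⟩ := hr
    refine ⟨hp, ?_, ?_⟩
    · rw [List.pairwise_cons] at hwq ⊢
      exact ⟨fun b hb => le_trans (le_of_lt h4) (hwq.1 b hb), hwq.2⟩
    · intro a ha b hb
      rcases List.mem_cons.1 hb with rfl | hb
      · exact h3 a ha
      · exact hcross a ha b (by simp [hb])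

theorem RI_head_le (r : List ℕ) (x : ℕ) : (rowInsert r x).1.headD 0 ≤ x ∨
    ((rowInsert r x).1.headD 0 = r.headD 0 ∧ r ≠ []) := by
  cases r with
  | nil => simp [RI_nil]
  | cons e t =>
    by_cases he : e ≤ x
    · right; rw [RI_cons_le t he]; simp
    · left; rw [RI_cons_gt t (Nat.not_le.1 he)]; simp

theorem RI_headD_le (r : List ℕ) (x : ℕ) : (rowInsert r x).1.getD 0 0 ≤ x ∨
    ((rowInsert r x).1.getD 0 0 = r.getD 0 0 ∧ r.getD 0 0 ≤ x) := by
  cases r with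
  | nil => left; simp [RI_nil]
  | cons e t =>
    by_cases he : e ≤ x
    · right; rw [RI_cons_le t he]; simp [he]
    · left; rw [RI_cons_gt t (Nat.not_le.1 he)]; simp

end Plactic

namespace L2

open Plactic

/-! ### rowFold basics -/

theorem rf_nil (r : List ℕ) : rowFold r [] = (r, []) := rfl

theorem rf_cons_none {r r₁ : List ℕ} {c : ℕ} (w : List ℕ)
    (h : rowInsert r c = (r₁, none)) : rowFold r (c :: w) = rowFold r₁ w := by
  simp [rowFold, h]

theorem rf_cons_some {r r₁ : List ℕ} {c y : ℕ} (w : List ℕ)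
    (h : rowInsert r c = (r₁, some y)) :
    rowFold r (c :: w) = ((rowFold r₁ w).1, y :: (rowFold r₁ w).2) := by
  simp [rowFold, h]

theorem rf_append (r : List ℕ) (w₁ w₂ : List ℕ) :
    rowFold r (w₁ ++ w₂) =
      ((rowFold (rowFold r w₁).1 w₂).1,
        (rowFold r w₁).2 ++ (rowFold (rowFold r w₁).1 w₂).2) := by
  induction w₁ generalizing r with
  | nil => simp [rf_nil]
  | cons c w ih =>
    rcases h : rowInsert r c with ⟨r₁, o⟩
    cases o with
    | none => rw [List.cons_append, rf_cons_none _ h, rf_cons_none _ h, ih]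
    | some y => rw [List.cons_append, rf_cons_some _ h, rf_cons_some _ h, ih]; simp

theorem rf_sorted {r : List ℕ} (w : List ℕ) (hr : List.Pairwise (· ≤ ·) r) :
    List.Pairwise (· ≤ ·) (rowFold r w).1 := by
  induction w generalizing r with
  | nil => exact hr
  | cons c w ih =>
    rcases h : rowInsert r c with ⟨r₁, o⟩
    have h1 : (rowInsert r c).1 = r₁ := by rw [h]
    have hs := h1 ▸ RI_sorted (x := c) hr
    cases o with
    | none => rw [rf_cons_none _ h]; exact ih hs
    | some y => rw [rf_cons_some _ h]; exact ih hs

/-- `insertEntry` on a cons -/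
theorem IE_cons_none {r r₁ : List ℕ} {c : ℕ} (rest : Tab)
    (h : rowInsert r c = (r₁, none)) : insertEntry (r :: rest) c = r₁ :: rest := by
  simp [insertEntry, h]

theorem IE_cons_some {r r₁ : List ℕ} {c y : ℕ} (rest : Tab)
    (h : rowInsert r c = (r₁, some y)) :
    insertEntry (r :: rest) c = r₁ :: insertEntry rest y := by
  simp [insertEntry, h]

/-- Key structural decomposition: inserting a word into `r :: rest` acts on `r`
by `rowFold` and sends the bumped outputs into `rest`. -/
theorem FOLD1 (r : List ℕ) (rest : Tab) (w : List ℕ) :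
    P (r :: rest) w = (rowFold r w).1 :: P rest (rowFold r w).2 := by
  induction w generalizing r rest with
  | nil => simp [rf_nil, P]
  | cons c w ih =>
    rcases h : rowInsert r c with ⟨r₁, o⟩
    cases o with
    | none =>
      show P (insertEntry (r :: rest) c) w = _
      rw [IE_cons_none rest h, ih, rf_cons_none _ h]
    | some y =>
      show P (insertEntry (r :: rest) c) w = _
      rw [IE_cons_some rest h, ih, rf_cons_some _ h]
      rfl

def bumpRows : Tab → List ℕ → Tab × List ℕ
  | [], w => ([], w)
  | r :: U, w =>
    let p := rowFold r w
    let q := bumpRows U p.2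
    (p.1 :: q.1, q.2)

theorem bumpRows_len (U : Tab) (w : List ℕ) : (bumpRows U w).1.length = U.length := by
  induction U generalizing w with
  | nil => rfl
  | cons r U ih => simp [bumpRows, ih]

/-- L1: horizontal-cut decomposition of insertion. -/
theorem L1 (U D : Tab) (w : List ℕ) :
    P (U ++ D) w = (bumpRows U w).1 ++ P D (bumpRows U w).2 := by
  induction U generalizing w with
  | nil => simp [bumpRows]
  | cons r U ih =>
    rw [List.cons_append, FOLD1, ih]
    simp [bumpRows]

theorem row0_insertEntry (T : Tab) (x : ℕ) :
    (insertEntry T x).headD [] = (rowInsert (T.headD []) x).1 := by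
  cases T with
  | nil => simp [insertEntry, RI_nil]
  | cons r rest =>
    rcases h : rowInsert r x with ⟨r₁, o⟩
    cases o with
    | none => rw [IE_cons_none rest h]; simp [h]
    | some y => rw [IE_cons_some rest h]; simp [h]

theorem row0_P (T : Tab) (w : List ℕ) :
    (P T w).headD [] = (rowFold (T.headD []) w).1 := by
  induction w generalizing T with
  | nil => simp [rf_nil]
  | cons c w ih =>
    show (P (insertEntry T c) w).headD [] = _
    rw [ih, row0_insertEntry]
    rcases h : rowInsert (T.headD []) c with ⟨r₁, o⟩
    cases o with
    | none => rw [rf_cons_none _ h]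
    | some y => rw [rf_cons_some _ h]


theorem insertEntry_ne_nil (T : Tab) (x : ℕ) : insertEntry T x ≠ [] := by
  cases T with
  | nil => simp [insertEntry]
  | cons r rest =>
    rcases h : rowInsert r x with ⟨r₁, o⟩
    cases o with
    | none => rw [IE_cons_none rest h]; simp
    | some y => rw [IE_cons_some rest h]; simp

theorem P_ne_nil {T : Tab} (w : List ℕ) (hT : T ≠ []) : P T w ≠ [] := by
  induction w generalizing T with
  | nil => exact hT
  | cons c w ih => exact ih (insertEntry_ne_nil T c)

theorem P_eq_nil {T : Tab} {w : List ℕ} (h : P T w = []) : T = [] ∧ w = [] := by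
  cases w with
  | nil => exact ⟨h, rfl⟩
  | cons c w => exact absurd h (P_ne_nil w (insertEntry_ne_nil T c))

def RowsIncr (T : Tab) : Prop := ∀ r ∈ T, List.Pairwise (· ≤ ·) r

theorem RowsIncr_insertEntry {T : Tab} (x : ℕ) (hT : RowsIncr T) :
    RowsIncr (insertEntry T x) := by
  induction T generalizing x with
  | nil =>
    intro r hr
    simp [insertEntry] at hr
    simp [hr]
  | cons r rest ih =>
    rcases h : rowInsert r x with ⟨r₁, o⟩
    have h1 : (rowInsert r x).1 = r₁ := by rw [h]
    have hs := h1 ▸ RI_sorted (x := x) (hT r (by simp))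
    cases o with
    | none =>
      rw [IE_cons_none rest h]
      intro s hs'
      rcases List.mem_cons.1 hs' with rfl | hs'
      · exact hs
      · exact hT s (by simp [hs'])
    | some y =>
      rw [IE_cons_some rest h]
      intro s hs'
      rcases List.mem_cons.1 hs' with rfl | hs'
      · exact hs
      · exact ih y (fun t ht => hT t (by simp [ht])) s hs'

theorem RowsIncr_P {T : Tab} (w : List ℕ) (hT : RowsIncr T) : RowsIncr (P T w) := by
  induction w generalizing T with
  | nil => exact hT
  | cons c w ih => exact ih (RowsIncr_insertEntry c hT)

end L2

namespace L3

open Plactic L2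

/-! ### helpers about sorted append -/

theorem sorted_cross {p q : List ℕ} (h : List.Pairwise (· ≤ ·) (p ++ q)) :
    ∀ a ∈ p, ∀ b ∈ q, a ≤ b := by
  rw [List.pairwise_append] at h
  exact h.2.2

theorem sorted_of_append_left {p q : List ℕ} (h : List.Pairwise (· ≤ ·) (p ++ q)) :
    List.Pairwise (· ≤ ·) p := by
  rw [List.pairwise_append] at h; exact h.1

theorem sorted_of_append_right {p q : List ℕ} (h : List.Pairwise (· ≤ ·) (p ++ q)) :
    List.Pairwise (· ≤ ·) q := by
  rw [List.pairwise_append] at h; exact h.2.1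

theorem all_le_head {p : List ℕ} {c : ℕ} {w : List ℕ}
    (h : List.Pairwise (· ≤ ·) (p ++ c :: w)) : ∀ e ∈ p, e ≤ c :=
  fun e he => sorted_cross h e he c (by simp)

/-! ### GR0 / GRC : row fold of a dominating word -/

theorem GR0 {p w : List ℕ} (h : List.Pairwise (· ≤ ·) (p ++ w)) :
    rowFold p w = (p ++ w, []) := by
  induction w generalizing p with
  | nil => simp [rf_nil]
  | cons c w ih =>
    have happ : rowInsert p c = (p ++ [c], none) := RI_app (all_le_head h)
    rw [rf_cons_none _ happ, ih (by simpa using h)]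
    simp

theorem GRC {t : List ℕ} : ∀ {p w : List ℕ}, List.Pairwise (· ≤ ·) (p ++ w) →
    t.length ≤ w.length → (∀ j < t.length, w.getD j 0 < t.getD j 0) →
    rowFold (p ++ t) w = (p ++ w, t) := by
  induction t with
  | nil => intro p w h _ _; simpa using GR0 h
  | cons z t ih =>
    intro p w hsort hlen hdom
    cases w with
    | nil => simp at hlen
    | cons c w =>
      have hcz : c < z := by simpa using hdom 0 (by simp)
      have h1 : rowInsert (p ++ z :: t) c = (p ++ c :: t, some z) := by
        rw [RI_prefix _ (all_le_head hsort), RI_cons_gt t hcz]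
      rw [rf_cons_some _ h1]
      have h2 := ih (p := p ++ [c]) (w := w) (by simpa using hsort)
        (by simpa using hlen) (fun j hj => by simpa using hdom (j+1) (by simpa using hj))
      rw [show p ++ c :: t = (p ++ [c]) ++ t by simp, h2]
      simp

/-! ### stack structure -/

def RowOK (r : List ℕ) : Prop := r ≠ [] ∧ List.Pairwise (· ≤ ·) r

def DomS (r s : List ℕ) : Prop :=
  s.length ≤ r.length ∧ ∀ j < s.length, r.getD j 0 < s.getD j 0

def StackOK (T : Tab) : Prop := (∀ r ∈ T, RowOK r) ∧ List.Chain' DomS T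

theorem StackOK_nil : StackOK [] := ⟨by simp, List.isChain_nil⟩

theorem StackOK_tail {r : List ℕ} {T : Tab} (h : StackOK (r :: T)) : StackOK T :=
  ⟨fun s hs => h.1 s (by simp [hs]), h.2.tail⟩

theorem StackOK_head {r : List ℕ} {T : Tab} (h : StackOK (r :: T)) :
    DomS r (T.headD []) := by
  cases T with
  | nil => exact ⟨by simp, by simp⟩
  | cons s T => exact (List.isChain_cons_cons.1 h.2).1

theorem PROW {p w : List ℕ} (hp : p ≠ []) (h : List.Pairwise (· ≤ ·) (p ++ w)) :
    P [p] w = [p ++ w] := by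
  induction w generalizing p with
  | nil => simp
  | cons c w ih =>
    have happ : rowInsert p c = (p ++ [c], none) := RI_app (all_le_head h)
    show P (insertEntry [p] c) w = _
    rw [IE_cons_none _ happ, ih (by simp) (by simpa using h)]
    simp

/-- Cascade: inserting a dominating row stacks it on top. -/
theorem CASC {T : Tab} {u : List ℕ} (hT : StackOK T) (hu : RowOK u)
    (hdom : DomS u (T.headD [])) : P T u = u :: T := by
  cases T with
  | nil =>
    cases u with
    | nil => exact absurd rfl hu.1
    | cons c u' =>
      show P (insertEntry [] c) u' = _
      show P [[c]] u' = _
      rw [PROW (by simp) (by simpa using hu.2)]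
      rfl
  | cons t0 rest =>
    rw [FOLD1]
    have h0 : DomS u t0 := by simpa using hdom
    have hrf : rowFold t0 u = (u, t0) := by
      have := GRC (t := t0) (p := []) (w := u) (by simpa using hu.2) h0.1 h0.2
      simpa using this
    rw [hrf]
    have ht0 : RowOK t0 := hT.1 t0 (by simp)
    rw [CASC (StackOK_tail hT) ht0 (StackOK_head hT)]

/-! ### words -/

theorem wordOf_nil : wordOf [] = [] := rfl

theorem wordOf_cons (r : List ℕ) (T : Tab) : wordOf (r :: T) = wordOf T ++ r := by
  simp [wordOf]

/-- Stacking lemma: re-inserting the word of `U` into `base` rebuilds `U ++ base`. -/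
theorem STACKLEM : ∀ (U : Tab) {base : Tab}, StackOK (U ++ base) →
    P base (wordOf U) = U ++ base := by
  intro U
  induction U with
  | nil => intro base _; simp [wordOf_nil]
  | cons u U ih =>
    intro base h
    rw [wordOf_cons, P, List.foldl_append, ← P, ← P, ih (StackOK_tail h)]
    exact CASC (StackOK_tail h) (h.1 u (by simp)) (StackOK_head h)

theorem P_word_self {T : Tab} (h : StackOK T) : P [] (wordOf T) = T := by
  have := STACKLEM T (base := []) (by simpa using h)
  simpa using this

/-! ### row domination (first rows) -/

def Dom (t r : List ℕ) : Prop :=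
  r.length ≤ t.length ∧ ∀ j < r.length, t.getD j 0 ≤ r.getD j 0

theorem Dom_nil (t : List ℕ) : Dom t [] := ⟨by simp, by simp⟩

theorem Dom_cons {e b : ℕ} {t r : List ℕ} :
    Dom (e :: t) (b :: r) ↔ e ≤ b ∧ Dom t r := by
  constructor
  · intro ⟨h1, h2⟩
    refine ⟨by simpa using h2 0 (by simp), by simpa using h1, fun j hj => ?_⟩
    simpa using h2 (j+1) (by simpa using hj)
  · intro ⟨h1, ⟨h2, h3⟩⟩
    refine ⟨by simpa using h2, fun j hj => ?_⟩
    cases j with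
    | zero => simpa using h1
    | succ j => simpa using h3 j (by simpa using hj)

theorem Dom_trans {u t r : List ℕ} (h1 : Dom u t) (h2 : Dom t r) : Dom u r :=
  ⟨le_trans h2.1 h1.1, fun j hj =>
    le_trans (h1.2 j (lt_of_lt_of_le hj h2.1)) (h2.2 j hj)⟩

theorem RI_len_ge (t : List ℕ) (x : ℕ) : t.length ≤ (rowInsert t x).1.length := by
  rcases h : rowInsert t x with ⟨t', o⟩
  cases o with
  | none => obtain ⟨h1, -⟩ := RI_none_char h; simp [h1]
  | some w => obtain ⟨p, q, h1, h2, -, -⟩ := RI_char h; simp [h1, h2]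

theorem RI_entry_le (t : List ℕ) (x : ℕ) :
    ∀ j < t.length, (rowInsert t x).1.getD j 0 ≤ t.getD j 0 := by
  rcases h : rowInsert t x with ⟨t', o⟩
  cases o with
  | none =>
    obtain ⟨h1, -⟩ := RI_none_char h
    intro j hj
    rw [h1]
    show (t ++ [x]).getD j 0 ≤ _
    rw [List.getD_append _ _ _ _ hj]
  | some w =>
    obtain ⟨p, q, h1, h2, -, h4⟩ := RI_char h
    subst h1 h2
    intro j hj
    show (p ++ x :: q).getD j 0 ≤ (p ++ w :: q).getD j 0
    rcases lt_trichotomy j p.length with hc | hc | hc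
    · rw [List.getD_append _ _ _ _ hc, List.getD_append _ _ _ _ hc]
    · subst hc
      rw [List.getD_append_right _ _ _ _ (le_refl _), List.getD_append_right _ _ _ _ (le_refl _)]
      simpa using le_of_lt h4
    · rw [List.getD_append_right _ _ _ _ (le_of_lt hc), List.getD_append_right _ _ _ _ (le_of_lt hc)]
      rcases Nat.exists_eq_add_of_lt hc with ⟨k, rfl⟩
      have : p.length + k + 1 - p.length = k + 1 := by omega
      rw [this, List.getD_cons_succ, List.getD_cons_succ]

theorem Dom_RI_self (t : List ℕ) (x : ℕ) : Dom (rowInsert t x).1 t :=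
  ⟨RI_len_ge t x, RI_entry_le t x⟩

theorem DomStep {r : List ℕ} : ∀ {t : List ℕ}, Dom t r → ∀ x,
    Dom (rowInsert t x).1 (rowInsert r x).1 := by
  induction r with
  | nil =>
    intro t _ x
    rw [RI_nil]
    refine ⟨?_, ?_⟩
    · simpa using Nat.one_le_iff_ne_zero.2 (by
        simpa [List.length_eq_zero_iff] using RI_fst_ne_nil t x)
    · intro j hj
      obtain rfl : j = 0 := by simpa using hj
      rcases RI_headD_le t x with h | ⟨h1, h2⟩
      · simpa using h
      · rw [show ([x] : List ℕ).getD 0 0 = x from rfl, h1]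
        exact h2
  | cons b r ih =>
    intro t hd x
    cases t with
    | nil => exact absurd hd.1 (by simp)
    | cons e t =>
      obtain ⟨heb, hd'⟩ := Dom_cons.1 hd
      by_cases hb : b ≤ x
      · have he : e ≤ x := le_trans heb hb
        rw [RI_cons_le t he, RI_cons_le r hb]
        exact Dom_cons.2 ⟨heb, ih hd' x⟩
      · rw [RI_cons_gt r (Nat.not_le.1 hb)]
        by_cases he : e ≤ x
        · rw [RI_cons_le t he]
          exact Dom_cons.2 ⟨he, Dom_trans (Dom_RI_self t x) hd'⟩
        · rw [RI_cons_gt t (Nat.not_le.1 he)]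
          exact Dom_cons.2 ⟨le_refl x, hd'⟩

theorem DomFold {t r : List ℕ} (h : Dom t r) (w : List ℕ) :
    Dom (rowFold t w).1 (rowFold r w).1 := by
  induction w generalizing t r with
  | nil => simpa [rf_nil]
  | cons c w ih =>
    have step := DomStep h c
    rcases h1 : rowInsert t c with ⟨t₁, o₁⟩
    rcases h2 : rowInsert r c with ⟨r₁, o₂⟩
    rw [h1, h2] at step
    have ht : (rowFold t (c :: w)).1 = (rowFold t₁ w).1 := by
      cases o₁ with
      | none => rw [rf_cons_none _ h1]
      | some y => rw [rf_cons_some _ h1]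
    have hr : (rowFold r (c :: w)).1 = (rowFold r₁ w).1 := by
      cases o₂ with
      | none => rw [rf_cons_none _ h2]
      | some y => rw [rf_cons_some _ h2]
    rw [ht, hr]
    exact ih step

end L3

namespace L4

open Plactic L2 L3

inductive KStep : List ℕ → List ℕ → Prop
  | k1 {x y z : ℕ} : x < y → y ≤ z → KStep [y,x,z] [y,z,x]
  | k2 {x y z : ℕ} : x ≤ y → y < z → KStep [x,z,y] [z,x,y]

inductive KEq : List ℕ → List ℕ → Prop
  | refl (w) : KEq w w
  | symm {u v} : KEq u v → KEq v u
  | trans {u v w} : KEq u v → KEq v w → KEq u w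
  | step (p s : List ℕ) {u v} : KStep u v → KEq (p ++ u ++ s) (p ++ v ++ s)

theorem KEq.of_step {u v : List ℕ} (h : KStep u v) : KEq u v := by
  simpa using KEq.step [] [] h

theorem KEq.append_left {u v : List ℕ} (c : List ℕ) (h : KEq u v) :
    KEq (c ++ u) (c ++ v) := by
  induction h with
  | refl w => exact KEq.refl _
  | symm _ ih => exact ih.symm
  | trans _ _ ih1 ih2 => exact ih1.trans ih2
  | step p s hs =>
    have := KEq.step (c ++ p) s hs
    simpa [List.append_assoc] using this

theorem KEq.append_right {u v : List ℕ} (s' : List ℕ) (h : KEq u v) :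
    KEq (u ++ s') (v ++ s') := by
  induction h with
  | refl w => exact KEq.refl _
  | symm _ ih => exact ih.symm
  | trans _ _ ih1 ih2 => exact ih1.trans ih2
  | step p s hs =>
    have := KEq.step p (s ++ s') hs
    simpa [List.append_assoc] using this

private theorem moveB {x : ℕ} : ∀ {t : List ℕ} {e : ℕ},
    List.Pairwise (· ≤ ·) (e :: t) → x < e → KEq (e :: x :: t) ((e :: t) ++ [x]) := by
  intro t
  induction t with
  | nil => intro e _ _; simpa using KEq.refl [e, x]
  | cons t1 t' ih =>
    intro e hs hx
    have het1 : e ≤ t1 := (List.pairwise_cons.1 hs).1 t1 (by simp)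
    have s1 : KStep [e, x, t1] [e, t1, x] := KStep.k1 hx het1
    have e1 : KEq (e :: x :: t1 :: t') (e :: t1 :: x :: t') := by
      simpa using KEq.step [] t' s1
    have e2 : KEq (t1 :: x :: t') ((t1 :: t') ++ [x]) :=
      ih (List.pairwise_cons.1 hs).2 (lt_of_lt_of_le hx het1)
    exact e1.trans (by simpa using e2.append_left [e])

theorem ROWK : ∀ {r r' : List ℕ} {x w : ℕ}, List.Pairwise (· ≤ ·) r →
    rowInsert r x = (r', some w) → KEq (w :: r') (r ++ [x]) := by
  intro r
  induction r with
  | nil => intro r' x w _ h; simp [RI_nil] at h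
  | cons e t ih =>
    intro r' x w hs h
    by_cases he : e ≤ x
    · rw [RI_cons_le t he, Prod.ext_iff] at h
      simp only at h
      obtain ⟨h1, h2⟩ := h
      have ht : rowInsert t x = ((rowInsert t x).1, some w) := Prod.ext rfl h2
      have ihe := ih (List.pairwise_cons.1 hs).2 ht
      rcases ht1 : (rowInsert t x).1 with _ | ⟨c, t₂⟩
      · exact absurd ht1 (RI_fst_ne_nil t x)
      · have hcx : c ≤ x := by
          rcases RI_headD_le t x with hh | ⟨hh1, hh2⟩
          · simpa [ht1] using hh
          · have : c = t.getD 0 0 := by simpa [ht1] using hh1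
            omega
        have hec : e ≤ c := by
          have hc : c = x ∨ c ∈ t := RI_mem ht (by simp [ht1])
          rcases hc with rfl | hc
          · exact he
          · exact (List.pairwise_cons.1 hs).1 c hc
        have hcw : c < w := lt_of_le_of_lt hcx (RI_out_mem ht).2
        have s1 : KStep [e, w, c] [w, e, c] := KStep.k2 hec hcw
        have e3 : KEq (e :: w :: c :: t₂) (w :: e :: c :: t₂) := by
          simpa using KEq.step [] t₂ s1
        rw [← h1, ht1]
        refine KEq.trans e3.symm ?_
        have := (ht1 ▸ ihe).append_left [e]
        simpa using this
    · rw [RI_cons_gt t (Nat.not_le.1 he), Prod.ext_iff] at h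
      simp only at h
      obtain ⟨h1, h2⟩ := h
      obtain rfl : e = w := Option.some.inj h2
      rw [← h1]
      exact moveB hs (Nat.not_le.1 he)

theorem E1 {T : Tab} {x : ℕ} (hT : RowsIncr T) :
    KEq (wordOf (insertEntry T x)) (wordOf T ++ [x]) := by
  induction T generalizing x with
  | nil => simpa [insertEntry, wordOf] using KEq.refl [x]
  | cons r rest ih =>
    rcases h : rowInsert r x with ⟨r₁, o⟩
    cases o with
    | none =>
      rw [IE_cons_none rest h, wordOf_cons, wordOf_cons]
      obtain ⟨hr1, -⟩ := RI_none_char h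
      rw [hr1, List.append_assoc]
      exact KEq.refl _
    | some y =>
      rw [IE_cons_some rest h, wordOf_cons, wordOf_cons]
      have ihe := (ih (x := y) (fun s hs => hT s (by simp [hs]))).append_right r₁
      refine KEq.trans ihe ?_
      have hrow := (ROWK (hT r (by simp)) h).append_left (wordOf rest)
      rw [List.append_assoc]
      simpa using hrow

theorem E1fold {T : Tab} (w : List ℕ) (hT : RowsIncr T) :
    KEq (wordOf (P T w)) (wordOf T ++ w) := by
  induction w generalizing T with
  | nil => simpa using KEq.refl (wordOf T)
  | cons c w ih =>
    have h1 := ih (T := insertEntry T c) (RowsIncr_insertEntry c hT)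
    refine KEq.trans h1 ?_
    have h2 := (E1 (x := c) hT).append_right w
    simpa using h2

end L4

namespace L5

open Plactic L2 L3 L4

/-- symmetric one-step-or-equal relation -/
def SP (u v : List ℕ) : Prop := u = v ∨ KStep u v ∨ KStep v u

theorem SP.refl (u : List ℕ) : SP u u := Or.inl rfl

theorem SP.keq {u v : List ℕ} (h : SP u v) : KEq u v := by
  rcases h with rfl | h | h
  · exact KEq.refl u
  · exact KEq.of_step h
  · exact (KEq.of_step h).symm

/-- walking a word past a small head entry -/
theorem rf_walk {e : ℕ} {w : List ℕ} (hw : ∀ c ∈ w, e ≤ c) :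
    ∀ t, rowFold (e :: t) w = (e :: (rowFold t w).1, (rowFold t w).2) := by
  induction w with
  | nil => intro t; simp [rf_nil]
  | cons c w ih =>
    intro t
    have hec : e ≤ c := hw c (by simp)
    rcases h : rowInsert t c with ⟨t₁, o⟩
    have hcons : rowInsert (e :: t) c = (e :: t₁, o) := by
      rw [RI_cons_le t hec, h]
    cases o with
    | none =>
      rw [rf_cons_none _ hcons, rf_cons_none _ h, ih (fun c hc => hw c (by simp [hc]))]
    | some y =>
      rw [rf_cons_some _ hcons, rf_cons_some _ h, ih (fun c hc => hw c (by simp [hc]))]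

/-- second bump is at least the first, for increasing insertions -/
theorem RISEQ {r' r'1 r'2 : List ℕ} {y z wy w : ℕ} (hs : List.Pairwise (· ≤ ·) r')
    (hyz : y ≤ z) (h1 : rowInsert r' y = (r'1, some wy))
    (h2 : rowInsert r'1 z = (r'2, some w)) : wy ≤ w := by
  obtain ⟨p, q, hp1, hp2, hp3, hp4⟩ := RI_char h1
  have hwz : z < w := (RI_out_mem h2).2
  have hwmem : w ∈ r'1 := (RI_out_mem h2).1
  rw [hp2] at hwmem
  rcases List.mem_append.1 hwmem with hw | hw
  · exact absurd (lt_of_le_of_lt (le_trans (hp3 w hw) hyz) hwz) (lt_irrefl w)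
  · rcases List.mem_cons.1 hw with rfl | hw
    · exact absurd (lt_of_le_of_lt hyz hwz) (lt_irrefl w)
    · have := sorted_of_append_right (hp1 ▸ hs)
      exact (List.pairwise_cons.1 this).1 w hw

/-- bump output is minimal among entries exceeding the inserted value -/
theorem RI_out_min {t t' : List ℕ} {c w : ℕ} (hs : List.Pairwise (· ≤ ·) t)
    (h : rowInsert t c = (t', some w)) : ∀ e ∈ t, c < e → w ≤ e := by
  obtain ⟨p, q, hp1, -, hp3, -⟩ := RI_char h
  intro e he hce
  rw [hp1] at he
  rcases List.mem_append.1 he with hw | hw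
  · exact absurd (lt_of_lt_of_le hce (hp3 e hw)) (lt_irrefl c)
  · rcases List.mem_cons.1 hw with rfl | hw
    · exact le_refl e
    · have := sorted_of_append_right (hp1 ▸ hs)
      exact (List.pairwise_cons.1 this).1 e hw

theorem krow1 {x y z : ℕ} (hxy : x < y) (hyz : y ≤ z) :
    ∀ {r : List ℕ}, List.Pairwise (· ≤ ·) r →
    (rowFold r [y,x,z]).1 = (rowFold r [y,z,x]).1 ∧
      SP (rowFold r [y,x,z]).2 (rowFold r [y,z,x]).2 := by
  have hxz : x ≤ z := le_trans (le_of_lt hxy) hyz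
  intro r
  induction r with
  | nil =>
    intro _
    have i1 : rowInsert [] y = ([y], none) := RI_nil y
    have i2 : rowInsert [y] x = ([x], some y) := RI_cons_gt [] hxy
    have i3 : rowInsert [x] z = ([x,z], none) := RI_app (by simpa using hxz)
    have i4 : rowInsert [y] z = ([y,z], none) := RI_app (by simpa using hyz)
    have i5 : rowInsert [y,z] x = ([x,z], some y) := RI_cons_gt [z] hxy
    rw [rf_cons_none _ i1, rf_cons_some _ i2, rf_cons_none _ i3, rf_nil,
      rf_cons_none _ i1, rf_cons_none _ i4, rf_cons_some _ i5, rf_nil]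
    exact ⟨rfl, SP.refl _⟩
  | cons e r' ih =>
    intro hs
    have hs' := (List.pairwise_cons.1 hs).2
    have her' : ∀ c ∈ r', e ≤ c := (List.pairwise_cons.1 hs).1
    by_cases hex : e ≤ x
    · -- walk case
      have hall : ∀ c ∈ [y,x,z], e ≤ c := by
        intro c hc
        fin_cases hc <;> omega
      have hall' : ∀ c ∈ [y,z,x], e ≤ c := by
        intro c hc
        fin_cases hc <;> omega
      rw [rf_walk hall r', rf_walk hall' r']
      obtain ⟨g1, g2⟩ := ih hs'
      exact ⟨by rw [g1], g2⟩
    · have hxe : x < e := Nat.not_le.1 hex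
      by_cases hey : e ≤ y
      · -- branch P1-B2 : x < e ≤ y
        rcases hy : rowInsert r' y with ⟨r'1, oy⟩
        rcases hz : rowInsert r'1 z with ⟨r'2, oz⟩
        have i1 : rowInsert (e :: r') y = (e :: r'1, oy) := by
          rw [RI_cons_le r' hey, hy]
        have i2 : rowInsert (e :: r'1) x = (x :: r'1, some e) := RI_cons_gt r'1 hxe
        have i3 : rowInsert (x :: r'1) z = (x :: r'2, oz) := by
          rw [RI_cons_le r'1 hxz, hz]
        have i4 : rowInsert (e :: r'1) z = (e :: r'2, oz) := by
          rw [RI_cons_le r'1 (le_trans hey hyz), hz]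
        have i5 : rowInsert (e :: r'2) x = (x :: r'2, some e) := RI_cons_gt r'2 hxe
        cases oy with
        | none =>
          obtain ⟨hr1, hall⟩ := RI_none_char hy
          have : oz = none := by
            have : rowInsert r'1 z = (r'1 ++ [z], none) := by
              refine RI_app ?_
              intro f hf
              rw [hr1] at hf
              rcases List.mem_append.1 hf with hf | hf
              · exact le_trans (hall f hf) hyz
              · simpa using (by rcases List.mem_singleton.1 hf with rfl; exact hyz)
            rw [hz] at this
            exact (Prod.ext_iff.1 this).2
          subst this
          rw [rf_cons_none _ i1, rf_cons_some _ i2, rf_cons_none _ i3, rf_nil,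
            rf_cons_none _ i1, rf_cons_none _ i4, rf_cons_some _ i5, rf_nil]
          exact ⟨rfl, SP.refl _⟩
        | some wy =>
          cases oz with
          | none =>
            rw [rf_cons_some _ i1, rf_cons_some _ i2, rf_cons_none _ i3, rf_nil,
              rf_cons_some _ i1, rf_cons_none _ i4, rf_cons_some _ i5, rf_nil]
            exact ⟨rfl, SP.refl _⟩
          | some w =>
            rw [rf_cons_some _ i1, rf_cons_some _ i2, rf_cons_some _ i3, rf_nil,
              rf_cons_some _ i1, rf_cons_some _ i4, rf_cons_some _ i5, rf_nil]
            refine ⟨rfl, Or.inr (Or.inl ?_)⟩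
            -- [wy, e, w] → [wy, w, e] : KStep.k1 with e < wy ≤ w
            have hwy : y < wy := (RI_out_mem hy).2
            have hew : e < wy := lt_of_le_of_lt hey hwy
            have hseq : wy ≤ w := RISEQ hs' hyz hy hz
            exact KStep.k1 hew hseq
      · -- branch P1-B3 : y < e
        have hye : y < e := Nat.not_le.1 hey
        rcases hz : rowInsert r' z with ⟨r'2, oz⟩
        have i1 : rowInsert (e :: r') y = (y :: r', some e) := RI_cons_gt r' hye
        have i2 : rowInsert (y :: r') x = (x :: r', some y) := RI_cons_gt r' hxy
        have i3 : rowInsert (x :: r') z = (x :: r'2, oz) := by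
          rw [RI_cons_le r' hxz, hz]
        have i4 : rowInsert (y :: r') z = (y :: r'2, oz) := by
          rw [RI_cons_le r' hyz, hz]
        have i5 : rowInsert (y :: r'2) x = (x :: r'2, some y) := RI_cons_gt r'2 hxy
        cases oz with
        | none =>
          rw [rf_cons_some _ i1, rf_cons_some _ i2, rf_cons_none _ i3, rf_nil,
            rf_cons_some _ i1, rf_cons_none _ i4, rf_cons_some _ i5, rf_nil]
          exact ⟨rfl, SP.refl _⟩
        | some w =>
          rw [rf_cons_some _ i1, rf_cons_some _ i2, rf_cons_some _ i3, rf_nil,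
            rf_cons_some _ i1, rf_cons_some _ i4, rf_cons_some _ i5, rf_nil]
          refine ⟨rfl, Or.inr (Or.inl ?_)⟩
          -- [e, y, w] → [e, w, y] : KStep.k1 with y < e ≤ w
          have hew : e ≤ w := her' w (RI_out_mem hz).1
          exact KStep.k1 hye hew

theorem krow2 {x y z : ℕ} (hxy : x ≤ y) (hyz : y < z) :
    ∀ {r : List ℕ}, List.Pairwise (· ≤ ·) r →
    (rowFold r [x,z,y]).1 = (rowFold r [z,x,y]).1 ∧
      SP (rowFold r [x,z,y]).2 (rowFold r [z,x,y]).2 := by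
  have hxz : x < z := lt_of_le_of_lt hxy hyz
  intro r
  induction r with
  | nil =>
    intro _
    have i1 : rowInsert [] x = ([x], none) := RI_nil x
    have i2 : rowInsert [x] z = ([x,z], none) := RI_app (by simpa using le_of_lt hxz)
    have i3 : rowInsert [x,z] y = ([x,y], some z) := by
      rw [show [x,z] = [x] ++ [z] from rfl, RI_prefix [z] (by simpa using hxy),
        RI_cons_gt [] hyz]
      rfl
    have i4 : rowInsert [] z = ([z], none) := RI_nil z
    have i5 : rowInsert [z] x = ([x], some z) := RI_cons_gt [] hxz
    have i6 : rowInsert [x] y = ([x,y], none) := RI_app (by simpa using hxy)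
    rw [rf_cons_none _ i1, rf_cons_none _ i2, rf_cons_some _ i3, rf_nil,
      rf_cons_none _ i4, rf_cons_some _ i5, rf_cons_none _ i6, rf_nil]
    exact ⟨rfl, SP.refl _⟩
  | cons e r' ih =>
    intro hs
    have hs' := (List.pairwise_cons.1 hs).2
    have her' : ∀ c ∈ r', e ≤ c := (List.pairwise_cons.1 hs).1
    by_cases hex : e ≤ x
    · -- walk case
      have hall : ∀ c ∈ [x,z,y], e ≤ c := by
        intro c hc
        fin_cases hc <;> omega
      have hall' : ∀ c ∈ [z,x,y], e ≤ c := by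
        intro c hc
        fin_cases hc <;> omega
      rw [rf_walk hall r', rf_walk hall' r']
      obtain ⟨g1, g2⟩ := ih hs'
      exact ⟨by rw [g1], g2⟩
    · have hxe : x < e := Nat.not_le.1 hex
      by_cases hez : e ≤ z
      · -- branch P2-B2 : x < e ≤ z
        rcases hz : rowInsert r' z with ⟨r'1, oz⟩
        rcases hy : rowInsert r'1 y with ⟨r'2, oy⟩
        have i1 : rowInsert (e :: r') x = (x :: r', some e) := RI_cons_gt r' hxe
        have i2 : rowInsert (x :: r') z = (x :: r'1, oz) := by
          rw [RI_cons_le r' (le_of_lt hxz), hz]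
        have i3 : rowInsert (x :: r'1) y = (x :: r'2, oy) := by
          rw [RI_cons_le r'1 hxy, hy]
        have i4 : rowInsert (e :: r') z = (e :: r'1, oz) := by
          rw [RI_cons_le r' hez, hz]
        have i5 : rowInsert (e :: r'1) x = (x :: r'1, some e) := RI_cons_gt r'1 hxe
        cases oz with
        | none =>
          cases oy with
          | none =>
            rw [rf_cons_some _ i1, rf_cons_none _ i2, rf_cons_none _ i3, rf_nil,
              rf_cons_none _ i4, rf_cons_some _ i5, rf_cons_none _ i3, rf_nil]
            exact ⟨rfl, SP.refl _⟩
          | some w2 =>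
            rw [rf_cons_some _ i1, rf_cons_none _ i2, rf_cons_some _ i3, rf_nil,
              rf_cons_none _ i4, rf_cons_some _ i5, rf_cons_some _ i3, rf_nil]
            exact ⟨rfl, SP.refl _⟩
        | some w =>
          cases oy with
          | none =>
            -- impossible: z ∈ r'1 and z > y forces a bump
            exfalso
            obtain ⟨hn1, hn2⟩ := RI_none_char hy
            obtain ⟨p, q, hc1, hc2, -, -⟩ := RI_char hz
            have : z ≤ y := hn2 z (by simp [hc2])
            omega
          | some w2 =>
            rw [rf_cons_some _ i1, rf_cons_some _ i2, rf_cons_some _ i3, rf_nil,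
              rf_cons_some _ i4, rf_cons_some _ i5, rf_cons_some _ i3, rf_nil]
            refine ⟨rfl, Or.inr (Or.inl ?_)⟩
            -- [e, w, w2] → [w, e, w2] : KStep.k2 with e ≤ w2 < w
            have hsr'1 : List.Pairwise (· ≤ ·) r'1 := by
              have := RI_sorted (x := z) hs'
              rwa [hz] at this
            have hzmem : z ∈ r'1 := by
              obtain ⟨p, q, hc1, hc2, -, -⟩ := RI_char hz
              simp [hc2]
            have hw2z : w2 ≤ z := RI_out_min hsr'1 hy z hzmem hyz
            have hw2w : w2 < w := lt_of_le_of_lt hw2z (RI_out_mem hz).2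
            have hew2 : e ≤ w2 :=  by
              rcases RI_mem hz (RI_out_mem hy).1 with rfl | hm
              · exact hez
              · exact her' w2 hm
            exact KStep.k2 hew2 hw2w
      · -- branch P2-B3 : z < e
        have hze : z < e := Nat.not_le.1 hez
        have hye : y < e := lt_trans hyz hze
        cases r' with
        | nil =>
          have i1 : rowInsert [e] x = ([x], some e) := RI_cons_gt [] (lt_trans hxz hze)
          have i2 : rowInsert [x] z = ([x,z], none) := RI_app (by simpa using le_of_lt hxz)
          have i3 : rowInsert [x,z] y = ([x,y], some z) := by
            rw [show [x,z] = [x] ++ [z] from rfl, RI_prefix [z] (by simpa using hxy),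
              RI_cons_gt [] hyz]
            rfl
          have i4 : rowInsert [e] z = ([z], some e) := RI_cons_gt [] hze
          have i5 : rowInsert [z] x = ([x], some z) := RI_cons_gt [] hxz
          have i6 : rowInsert [x] y = ([x,y], none) := RI_app (by simpa using hxy)
          rw [rf_cons_some _ i1, rf_cons_none _ i2, rf_cons_some _ i3, rf_nil,
            rf_cons_some _ i4, rf_cons_some _ i5, rf_cons_none _ i6, rf_nil]
          exact ⟨rfl, SP.refl _⟩
        | cons w0 rt =>
          have hew0 : e ≤ w0 := her' w0 (by simp)
          have hzw0 : z < w0 := lt_of_lt_of_le hze hew0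
          have hyw0 : y < w0 := lt_trans hyz hzw0
          have i1 : rowInsert (e :: w0 :: rt) x = (x :: w0 :: rt, some e) :=
            RI_cons_gt _ (lt_trans hxz hze)
          have i2 : rowInsert (x :: w0 :: rt) z = (x :: z :: rt, some w0) := by
            rw [RI_cons_le _ (le_of_lt hxz), RI_cons_gt rt hzw0]
          have i3 : rowInsert (x :: z :: rt) y = (x :: y :: rt, some z) := by
            rw [RI_cons_le _ hxy, RI_cons_gt rt hyz]
          have i4 : rowInsert (e :: w0 :: rt) z = (z :: w0 :: rt, some e) :=
            RI_cons_gt _ hze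
          have i5 : rowInsert (z :: w0 :: rt) x = (x :: w0 :: rt, some z) :=
            RI_cons_gt _ hxz
          have i6 : rowInsert (x :: w0 :: rt) y = (x :: y :: rt, some w0) := by
            rw [RI_cons_le _ hxy, RI_cons_gt rt hyw0]
          rw [rf_cons_some _ i1, rf_cons_some _ i2, rf_cons_some _ i3, rf_nil,
            rf_cons_some _ i4, rf_cons_some _ i5, rf_cons_some _ i6, rf_nil]
          refine ⟨rfl, Or.inr (Or.inr ?_)⟩
          -- KStep [e,z,w0] [e,w0,z] : k1 with z < e ≤ w0
          exact KStep.k1 hze hew0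

theorem KROW {u v : List ℕ} (h : KStep u v) {r : List ℕ}
    (hr : List.Pairwise (· ≤ ·) r) :
    (rowFold r u).1 = (rowFold r v).1 ∧ SP (rowFold r u).2 (rowFold r v).2 := by
  cases h with
  | k1 hxy hyz => exact krow1 hxy hyz hr
  | k2 hxy hyz => exact krow2 hxy hyz hr

end L5

namespace L6

open Plactic L2 L3 L4 L5

theorem P_cons (T : Tab) (c : ℕ) (w : List ℕ) : P T (c :: w) = P (insertEntry T c) w := rfl

theorem KTAB : ∀ {T : Tab}, RowsIncr T → ∀ {u v : List ℕ}, KStep u v → P T u = P T v := by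
  intro T
  induction T with
  | nil =>
    intro _ u v h
    cases h with
    | @k1 x y z hxy hyz =>
      have e2 : insertEntry [[y]] x = [[x],[y]] := by
        rw [IE_cons_some [] (RI_cons_gt [] hxy)]; rfl
      have e3 : insertEntry [[x],[y]] z = [[x,z],[y]] := by
        rw [IE_cons_none [[y]] (RI_app (by simpa using le_trans (le_of_lt hxy) hyz))]; rfl
      have e4 : insertEntry [[y]] z = [[y,z]] := by
        rw [IE_cons_none [] (RI_app (by simpa using hyz))]; rfl
      have e5 : insertEntry [[y,z]] x = [[x,z],[y]] := by
        rw [IE_cons_some [] (RI_cons_gt [z] hxy)]; rfl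
      show insertEntry (insertEntry (insertEntry [] y) x) z
          = insertEntry (insertEntry (insertEntry [] y) z) x
      rw [show insertEntry ([] : Tab) y = [[y]] from rfl, e2, e3, e4, e5]
    | @k2 x y z hxy hyz =>
      have e2 : insertEntry [[x]] z = [[x,z]] := by
        rw [IE_cons_none [] (RI_app (by simpa using le_of_lt (lt_of_le_of_lt hxy hyz)))]; rfl
      have e3 : insertEntry [[x,z]] y = [[x,y],[z]] := by
        have : rowInsert [x,z] y = ([x,y], some z) := by
          rw [show [x,z] = [x] ++ [z] from rfl, RI_prefix [z] (by simpa using hxy),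
            RI_cons_gt [] hyz]
          rfl
        rw [IE_cons_some [] this]; rfl
      have e4 : insertEntry [[z]] x = [[x],[z]] := by
        rw [IE_cons_some [] (RI_cons_gt [] (lt_of_le_of_lt hxy hyz))]; rfl
      have e5 : insertEntry [[x],[z]] y = [[x,y],[z]] := by
        rw [IE_cons_none [[z]] (RI_app (by simpa using hxy))]; rfl
      show insertEntry (insertEntry (insertEntry [] x) z) y
          = insertEntry (insertEntry (insertEntry [] z) x) y
      rw [show insertEntry ([] : Tab) x = [[x]] from rfl,
        show insertEntry ([] : Tab) z = [[z]] from rfl, e2, e3, e4, e5]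
  | cons r rest ih =>
    intro hT u v h
    rw [FOLD1, FOLD1]
    obtain ⟨g1, g2⟩ := KROW h (hT r (by simp))
    rw [g1]
    rcases g2 with g2 | g2 | g2
    · rw [g2]
    · rw [ih (fun s hs => hT s (by simp [hs])) g2]
    · rw [ih (fun s hs => hT s (by simp [hs])) g2]

theorem KINV {u v : List ℕ} (h : KEq u v) : ∀ {T : Tab}, RowsIncr T → P T u = P T v := by
  induction h with
  | refl w => intro T _; rfl
  | symm _ ih => intro T hT; exact (ih hT).symm
  | trans _ _ ih1 ih2 => intro T hT; exact (ih1 hT).trans (ih2 hT)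
  | step p s hs =>
    intro T hT
    show List.foldl insertEntry T _ = List.foldl insertEntry T _
    rw [List.foldl_append, List.foldl_append, List.foldl_append, List.foldl_append]
    have : RowsIncr (P T p) := RowsIncr_P p hT
    rw [show (List.foldl insertEntry (List.foldl insertEntry T p) _ : Tab)
        = P (P T p) _ from rfl]
    rw [show (List.foldl insertEntry (List.foldl insertEntry T p) _ : Tab)
        = P (P T p) _ from rfl]
    rw [KTAB this hs]

theorem RowsIncr_of_StackOK {T : Tab} (h : StackOK T) : RowsIncr T :=
  fun r hr => (h.1 r hr).2

theorem commute1 {M T : Tab} (hM : StackOK M) (hT : RowsIncr T) (y : ℕ) :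
    mulT M (insertEntry T y) = insertEntry (mulT M T) y := by
  show P M (wordOf (insertEntry T y)) = insertEntry (P M (wordOf T)) y
  conv_lhs => rw [← P_word_self hM]
  conv_rhs => rw [← P_word_self hM]
  show List.foldl insertEntry (List.foldl insertEntry [] (wordOf M)) _
      = insertEntry (List.foldl insertEntry (List.foldl insertEntry [] (wordOf M)) _) y
  rw [← List.foldl_append, ← List.foldl_append]
  have h1 : KEq (wordOf M ++ wordOf (insertEntry T y)) (wordOf M ++ (wordOf T ++ [y])) :=
    (E1 hT).append_left (wordOf M)
  have h2 := KINV h1 (T := []) (by intro r hr; simp at hr)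
  show P [] _ = insertEntry (P [] _) y
  rw [h2, show wordOf M ++ (wordOf T ++ [y]) = (wordOf M ++ wordOf T) ++ [y] by
    rw [List.append_assoc]]
  show List.foldl insertEntry [] _ = _
  rw [List.foldl_append]
  rfl

theorem commuteF {M : Tab} (hM : StackOK M) :
    ∀ (w : List ℕ) {T : Tab}, RowsIncr T → mulT M (P T w) = P (mulT M T) w := by
  intro w
  induction w with
  | nil => intro T _; rfl
  | cons c w ih =>
    intro T hT
    rw [P_cons, ih (RowsIncr_insertEntry c hT), P_cons, commute1 hM hT]

end L6

namespace L7

open Plactic L2 L3 L4 L5 L6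

private theorem getD_at (p q : List ℕ) (a : ℕ) : (p ++ a :: q).getD p.length 0 = a := by
  rw [List.getD_append_right _ _ _ _ (le_refl _)]; simp

private theorem getD_ne (p q : List ℕ) (a b : ℕ) {c : ℕ} (hc : c ≠ p.length) :
    (p ++ a :: q).getD c 0 = (p ++ b :: q).getD c 0 := by
  rcases lt_or_gt_of_ne hc with hlt | hgt
  · rw [List.getD_append _ _ _ _ hlt, List.getD_append _ _ _ _ hlt]
  · rw [List.getD_append_right _ _ _ _ (le_of_lt hgt),
      List.getD_append_right _ _ _ _ (le_of_lt hgt)]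
    rcases Nat.exists_eq_add_of_lt hgt with ⟨k, rfl⟩
    have : p.length + k + 1 - p.length = k + 1 := by omega
    rw [this, List.getD_cons_succ, List.getD_cons_succ]

private theorem getD_mem' (l : List ℕ) {c : ℕ} (hc : c < l.length) : l.getD c 0 ∈ l := by
  rw [List.getD_eq_getElem _ _ hc]
  exact List.getElem_mem _

/-- Junction lemma. -/
theorem JUNC {r s r' : List ℕ} {x y : ℕ} (hds : DomS r s)
    (h : rowInsert r x = (r', some y)) : DomS r' (rowInsert s y).1 := by
  obtain ⟨p, q, hp1, hp2, hp3, hp4⟩ := RI_char h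
  obtain ⟨hlen, hent⟩ := hds
  subst hp1 hp2
  have hrlt : ∀ c < p.length, (p ++ y :: q).getD c 0 ≤ x := by
    intro c hcj
    rw [List.getD_append _ _ _ _ hcj]
    exact hp3 _ (getD_mem' p hcj)
  rcases hsy : rowInsert s y with ⟨s', o⟩
  cases o with
  | some w2 =>
    obtain ⟨p₁, q₁, hq1, hq2, hq3, hq4⟩ := RI_char hsy
    subst hq1 hq2
    have hj1j : p₁.length ≤ p.length := by
      by_contra hcon
      push_neg at hcon
      have hjs : p.length < (p₁ ++ w2 :: q₁).length := by
        simp only [List.length_append, List.length_cons]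
        omega
      have h1 : (p₁ ++ w2 :: q₁).getD p.length 0 ≤ y := by
        rw [List.getD_append _ _ _ _ hcon]
        exact hq3 _ (getD_mem' p₁ hcon)
      have h2 := hent p.length hjs
      rw [getD_at] at h2
      omega
    constructor
    · show (p₁ ++ y :: q₁).length ≤ (p ++ x :: q).length
      simp only [List.length_append, List.length_cons] at hlen ⊢
      omega
    · intro c hc
      replace hc : c < (p₁ ++ y :: q₁).length := hc
      have hcs : c < (p₁ ++ w2 :: q₁).length := by
        simp only [List.length_append, List.length_cons] at hc ⊢
        omega
      show (p ++ x :: q).getD c 0 < (p₁ ++ y :: q₁).getD c 0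
      by_cases hcj1 : c = p₁.length
      · rw [hcj1, getD_at p₁ q₁ y]
        by_cases hcj : p₁.length = p.length
        · rw [hcj, getD_at p q x]
          exact hp4
        · have hlt : p₁.length < p.length := lt_of_le_of_ne hj1j hcj
          rw [getD_ne p q x y (by omega)]
          exact lt_of_le_of_lt (hrlt _ hlt) hp4
      · rw [getD_ne p₁ q₁ y w2 hcj1]
        by_cases hcj : c = p.length
        · rw [hcj, getD_at p q x]
          have h2 := hent c hcs
          rw [hcj, getD_at p q y] at h2
          exact lt_trans hp4 h2
        · rw [getD_ne p q x y hcj]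
          exact hent c hcs
  | none =>
    obtain ⟨hq1, hq2⟩ := RI_none_char hsy
    subst hq1
    have hsj : s.length ≤ p.length := by
      by_contra hcon
      push_neg at hcon
      have h2 := hent p.length hcon
      rw [getD_at p q y] at h2
      have h3 := hq2 _ (getD_mem' s hcon)
      omega
    constructor
    · show (s ++ [y]).length ≤ (p ++ x :: q).length
      simp only [List.length_append, List.length_cons, List.length_nil]
      simp only [List.length_append, List.length_cons] at hlen
      omega
    · intro c hc
      replace hc : c < (s ++ [y]).length := hc
      simp only [List.length_append, List.length_cons, List.length_nil] at hc
      show (p ++ x :: q).getD c 0 < (s ++ [y]).getD c 0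
      by_cases hcs : c < s.length
      · rw [List.getD_append _ _ _ _ hcs, getD_ne p q x y (by omega)]
        exact hent c hcs
      · have hceq : c = s.length := by omega
        rw [hceq, List.getD_append_right _ _ _ _ (le_refl _), Nat.sub_self,
          List.getD_cons_zero]
        rcases lt_or_eq_of_le hsj with hlt | heq
        · rw [getD_ne p q x y (by omega)]
          exact lt_of_le_of_lt (hrlt _ hlt) hp4
        · rw [heq, getD_at]
          exact hp4

theorem chain'_cons_of' {a : List ℕ} {T : Tab}
    (h1 : DomS a (T.headD [])) (h2 : List.Chain' DomS T) : List.Chain' DomS (a :: T) := by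
  cases T with
  | nil => exact List.isChain_singleton _
  | cons s T' => exact List.isChain_cons_cons.2 ⟨by simpa using h1, h2⟩

theorem StackOK_insertEntry : ∀ {T : Tab}, StackOK T → ∀ x, StackOK (insertEntry T x) := by
  intro T
  induction T with
  | nil =>
    intro _ x
    refine ⟨?_, List.isChain_singleton _⟩
    intro r hr
    simp [insertEntry] at hr
    subst hr
    exact ⟨by simp, by simp⟩
  | cons r rest ih =>
    intro hT x
    have hrOK := hT.1 r (by simp)
    rcases h : rowInsert r x with ⟨r₁, o⟩
    have hr₁s : List.Pairwise (· ≤ ·) r₁ := by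
      have := RI_sorted (x := x) hrOK.2
      rwa [h] at this
    have hr₁ne : r₁ ≠ [] := by
      have := RI_fst_ne_nil r x
      rwa [h] at this
    cases o with
    | none =>
      rw [IE_cons_none rest h]
      obtain ⟨he1, -⟩ := RI_none_char h
      refine ⟨?_, ?_⟩
      · intro s hs
        rcases List.mem_cons.1 hs with rfl | hs
        · exact ⟨hr₁ne, hr₁s⟩
        · exact hT.1 s (by simp [hs])
      · refine chain'_cons_of' ?_ hT.2.tail
        obtain ⟨hl, he⟩ := StackOK_head hT
        refine ⟨le_trans hl (by simp [he1]), ?_⟩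
        intro c hc
        rw [he1, List.getD_append _ _ _ _ (lt_of_lt_of_le hc hl)]
        exact he c hc
    | some y =>
      rw [IE_cons_some rest h]
      refine ⟨?_, ?_⟩
      · intro s hs
        rcases List.mem_cons.1 hs with rfl | hs
        · exact ⟨hr₁ne, hr₁s⟩
        · exact (ih (StackOK_tail hT) y).1 s hs
      · refine chain'_cons_of' ?_ (ih (StackOK_tail hT) y).2
        rw [row0_insertEntry]
        exact JUNC (StackOK_head hT) h

theorem StackOK_P {T : Tab} (w : List ℕ) (hT : StackOK T) : StackOK (P T w) := by
  induction w generalizing T with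
  | nil => exact hT
  | cons c w ih => exact ih (StackOK_insertEntry hT c)

theorem StackOK_drop {T : Tab} (a : ℕ) (hT : StackOK T) : StackOK (T.drop a) :=
  ⟨fun r hr => hT.1 r (List.mem_of_mem_drop hr), hT.2.drop a⟩

end L7

namespace L8

open Plactic L2 L3 L4 L5 L6 L7

theorem chainDomS : ∀ {T : Tab}, List.Chain' (· ≥ ·) (T.map List.length) →
    (∀ i j, i + 1 < T.length → j < (T.getD (i+1) []).length →
      (T.getD i []).getD j 0 < (T.getD (i+1) []).getD j 0) →
    List.Chain' DomS T := by
  intro T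
  induction T with
  | nil => intro _ _; exact List.isChain_nil
  | cons r rest ih =>
    intro h2 h3
    refine chain'_cons_of' ?_ ?_
    · cases rest with
      | nil => exact ⟨by simp, by simp⟩
      | cons s rest' =>
        constructor
        · have := (List.isChain_cons_cons.1 h2).1
          simpa using this
        · intro j hj
          have := h3 0 j (by simp) (by simpa using hj)
          simpa using this
    · refine ih ?_ ?_
      · exact (by simpa using h2.tail : _)
      · intro i j hi hj
        have := h3 (i+1) j (by simpa using hi) (by simpa using hj)
        simpa using this

theorem StackOK_of_IsTableau {T : Tab} (h : IsTableau T) : StackOK T := by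
  refine ⟨?_, chainDomS h.2.1 h.2.2⟩
  intro r hr
  obtain ⟨h1, h2⟩ := h.1 r hr
  exact ⟨h1, List.isChain_iff_pairwise.1 h2⟩

theorem main (a : ℕ) (Y S M N : Tab)
    (hY : IsTableau Y) (hS : IsTableau S) (hM : IsTableau M) (hN : IsTableau N)
    (hMN : mulT M N = Y.drop a) :
    (mulT (mulT N (Y.take a)) S).take a = (mulT Y S).take a ∧
    mulT M ((mulT (mulT N (Y.take a)) S).drop a) = (mulT Y S).drop a := by
  have hYs : StackOK Y := StackOK_of_IsTableau hY
  have hMs : StackOK M := StackOK_of_IsTableau hM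
  have hNs : StackOK N := StackOK_of_IsTableau hN
  by_cases hdeg : Y.drop a = []
  · -- degenerate case: everything below row `a` is empty
    rw [hdeg] at hMN
    obtain ⟨hM0, hw0⟩ := P_eq_nil (show P M (wordOf N) = [] from hMN)
    have hN0 : N = [] := by
      cases N with
      | nil => rfl
      | cons r rest =>
        rw [wordOf_cons] at hw0
        have hr : r = [] := by
          rcases List.append_eq_nil_iff.1 hw0 with ⟨-, h⟩
          exact h
        exact absurd hr (hN.1 r (by simp)).1
    subst hM0 hN0
    have htake : Y.take a = Y :=
      List.take_of_length_le (List.drop_eq_nil_iff.1 hdeg)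
    have hV : mulT [] (Y.take a) = Y := by
      rw [htake]
      exact P_word_self hYs
    rw [hV]
    refine ⟨rfl, ?_⟩
    have hstD : StackOK ((mulT Y S).drop a) :=
      StackOK_drop a (StackOK_P (wordOf S) hYs)
    exact P_word_self hstD
  · -- main case
    have haY : a < Y.length := by
      by_contra hcon
      exact hdeg (List.drop_eq_nil_iff.2 (by omega))
    -- first-row domination
    have hNword : P ([] : Tab) (wordOf N) = N := P_word_self hNs
    have hdom : Dom ((Y.drop a).headD []) (N.headD []) := by
      have h1 : (Y.drop a).headD [] = (rowFold (M.headD []) (wordOf N)).1 := by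
        rw [← hMN]
        exact row0_P M (wordOf N)
      have h2 : N.headD [] = (rowFold ([] : List ℕ) (wordOf N)).1 := by
        conv_lhs => rw [← hNword]
        exact row0_P [] (wordOf N)
      rw [h1, h2]
      exact DomFold (Dom_nil _) (wordOf N)
    -- the stacked tableau Y.take a ++ N
    have hstack : StackOK (Y.take a ++ N) := by
      constructor
      · intro r hr
        rcases List.mem_append.1 hr with hr | hr
        · exact hYs.1 r (List.mem_of_mem_take hr)
        · exact hNs.1 r hr
      · unfold List.Chain'
        rw [List.isChain_append]
        refine ⟨hYs.2.take a, hNs.2, ?_⟩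
        intro x hx y hy
        have hYchain := hYs.2
        conv at hYchain => rw [← List.take_append_drop a Y]
        unfold List.Chain' at hYchain
        rw [List.isChain_append] at hYchain
        obtain ⟨-, -, hcross⟩ := hYchain
        obtain ⟨z, hz, hzz⟩ : ∃ z, (Y.drop a).head? = some z ∧ z = (Y.drop a).headD [] := by
          cases hdrop : Y.drop a with
          | nil => exact absurd hdrop hdeg
          | cons z zs => exact ⟨z, rfl, rfl⟩
        have hxz : DomS x z := hcross x hx z hz
        have hyy : y = N.headD [] := by
          cases hdropN : N with
          | nil => rw [hdropN] at hy; simp at hy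
          | cons n ns =>
            rw [hdropN] at hy
            simp at hy
            simp [hy]
        subst hzz hyy
        exact ⟨le_trans hdom.1 hxz.1,
          fun j hj => lt_of_lt_of_le (hxz.2 j (lt_of_lt_of_le hj hdom.1)) (hdom.2 j hj)⟩
    have hVeq : mulT N (Y.take a) = Y.take a ++ N := STACKLEM (Y.take a) hstack
    -- L1 decompositions
    have hlenTake : (Y.take a).length = a := by
      rw [List.length_take]
      omega
    have hA : mulT Y S = (bumpRows (Y.take a) (wordOf S)).1 ++
        P (Y.drop a) (bumpRows (Y.take a) (wordOf S)).2 := by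
      conv_lhs => rw [show mulT Y S = P Y (wordOf S) from rfl, ← List.take_append_drop a Y]
      exact L1 _ _ _
    have hB : mulT (mulT N (Y.take a)) S = (bumpRows (Y.take a) (wordOf S)).1 ++
        P N (bumpRows (Y.take a) (wordOf S)).2 := by
      rw [hVeq]
      exact L1 _ _ _
    have hBRlen : (bumpRows (Y.take a) (wordOf S)).1.length = a := by
      rw [bumpRows_len, hlenTake]
    constructor
    · rw [hA, hB, List.take_left' hBRlen, List.take_left' hBRlen]
    · rw [hA, hB, List.drop_left' hBRlen, List.drop_left' hBRlen]
      rw [commuteF hMs _ (RowsIncr_of_StackOK hNs), hMN]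

end L8

/-- Lemma: let `A = Y · S`, let `A = Ã · A₀` and `Y = Ỹ · Y₀` be the horizontal
cuts of `A` and `Y` after row `a` (so `A₀ = A.take a`, `Ã = A.drop a`, etc.), and
let `Ỹ = M · N` be any factorization.  Then the horizontal cut of `N · Y₀ · S`
after row `a` has top part `A₀`, and its bottom part `Ã'` satisfies `M · Ã' = Ã`. -/
theorem bottom_factor_moves (a : ℕ) (Y S M N : Tab)
    (hY : IsTableau Y) (hS : IsTableau S) (hM : IsTableau M) (hN : IsTableau N)
    (hMN : mulT M N = Y.drop a) :
    (mulT (mulT N (Y.take a)) S).take a = (mulT Y S).take a ∧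
    mulT M ((mulT (mulT N (Y.take a)) S).drop a) = (mulT Y S).drop a := by
  exact L8.main a Y S M N hY hS hM hN hMN
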